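/- Let A = (M, 𝓕) be a complete deterministic Muller acceptor over a finite alphabet Σ with n states, and let q₁ and q₂ be states of A. If there exists an ω-word that is accepted from exactly one of q₁ and q₂ (i.e., belongs to exactly one of ⟦A^{q₁}⟧ and ⟦A^{q₂}⟧), then there exist u ∈ Σ* and v ∈ Σ⁺ with |u| + |v| ≤ n² + n⁴ such that the ultimately periodic ω-word u(v)^ω is accepted from exactly one of q₁ and q₂. -/

import Mathlib

open Filter

/-- Extended transition function: `dstar δ q x` is the state reached from `q` reading `x`. -/
def dstar {Q A : Type*} (δ : Q → A → Q) (q : Q) (x : List A) : Q := x.foldl δ q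

/-- The run of a deterministic automaton on an ω-word from state `q`. -/
def run {Q A : Type*} (δ : Q → A → Q) (q : Q) (w : ℕ → A) : ℕ → Q
  | 0 => q
  | n + 1 => δ (run δ q w n) (w n)

/-- The set of states visited infinitely often by the run on `w` from `q`. -/
def infOcc {Q A : Type*} (δ : Q → A → Q) (q : Q) (w : ℕ → A) : Set Q :=
  {p | ∃ᶠ n in atTop, run δ q w n = p}

/-- `C` is a strongly connected component of the automaton with transitions `δ`. -/
def IsSCC {Q A : Type*} (δ : Q → A → Q) (C : Set Q) : Prop :=
  C.Nonempty ∧ ∀ q₁ ∈ C, ∀ q₂ ∈ C, ∃ x : List A, x ≠ [] ∧ dstar δ q₁ x = q₂ ∧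
    ∀ x', x' <+: x → dstar δ q₁ x' ∈ C

/-- `q` is reachable from the initial state `qι`. -/
def Reachable {Q A : Type*} (δ : Q → A → Q) (qι q : Q) : Prop :=
  ∃ x : List A, dstar δ qι x = q

/-- The ultimately periodic ω-word `u(v)^ω`. -/
def upWord {A : Type*} (u v : List A) (hv : v ≠ []) : ℕ → A := fun n =>
  if h : n < u.length then u[n]
  else v[(n - u.length) % v.length]'(Nat.mod_lt _ (List.length_pos_iff.mpr hv))

/-- The transition function of the product automaton. -/
def prodStep {Q₁ Q₂ A : Type*} (δ₁ : Q₁ → A → Q₁) (δ₂ : Q₂ → A → Q₂) :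
    Q₁ × Q₂ → A → Q₁ × Q₂ := fun p a => (δ₁ p.1 a, δ₂ p.2 a)

/-- The ω-word `x·z` obtained by prepending the finite word `x` to `z`. -/
def prepend {A : Type*} (x : List A) (z : ℕ → A) : ℕ → A := fun n =>
  if h : n < x.length then x[n] else z (n - x.length)

/-- Acceptance of a deterministic Muller acceptor from state `q`. -/
def mullerAccept {Q A : Type*} (δ : Q → A → Q) (𝓕 : Set (Set Q)) (q : Q) (w : ℕ → A) : Prop :=
  infOcc δ q w ∈ 𝓕


/-!
Run both copies of the automaton in parallel: the product automaton on `Q × Q` has `n²` states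
and its infinity set `S` on the distinguishing word `w` projects onto the infinity sets of the two
runs. Inside `S` any two states are joined by a path that stays in `S`, and by pigeonhole such a
path can be shortened to length at most `n²`. Chaining at most `n²` of them gives a loop `v` of
length at most `n⁴` through all of `S` that never leaves `S`; together with a prefix `u` of length
less than `n²` reaching the loop, the run on `u(v)^ω` has infinity set exactly `S`, so `u(v)^ω`
distinguishes the two states just as `w` does.
-/

section

variable {A Q : Type*}

@[simp]
lemma dstar_nil (δ : Q → A → Q) (q : Q) : dstar δ q [] = q := rfl

lemma dstar_append (δ : Q → A → Q) (q : Q) (x y : List A) :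
    dstar δ q (x ++ y) = dstar δ (dstar δ q x) y :=
  List.foldl_append

lemma run_add (δ : Q → A → Q) (q : Q) (w : ℕ → A) (N k : ℕ) :
    run δ q w (N + k) = dstar δ (run δ q w N) ((List.range' N k).map w) := by
  induction k with
  | zero => rfl
  | succ k ih =>
    rw [List.range'_1_concat, List.map_append, dstar_append, ← ih]
    rfl

lemma run_eq_dstar (δ : Q → A → Q) (q : Q) (w : ℕ → A) (N : ℕ) :
    run δ q w N = dstar δ q ((List.range' 0 N).map w) := by
  have h := run_add δ q w 0 N
  rwa [Nat.zero_add] at h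

lemma run_prodStep {Q' : Type*} (δ : Q → A → Q) (δ' : Q' → A → Q') (p : Q) (p' : Q')
    (w : ℕ → A) (n : ℕ) :
    run (prodStep δ δ') (p, p') w n = (run δ p w n, run δ' p' w n) := by
  induction n with
  | zero => rfl
  | succ n ih => simp only [run, ih, prodStep]

section InfOcc

variable [Finite Q] (δ : Q → A → Q) (q : Q) (w : ℕ → A)

lemma infOcc_nonempty : (infOcc δ q w).Nonempty :=
  frequently_exists.1 (Frequently.of_forall fun n => ⟨run δ q w n, rfl⟩)

lemma eventually_mem_infOcc : ∀ᶠ n in atTop, run δ q w n ∈ infOcc δ q w := by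
  have h : ∀ p, ∀ᶠ n in atTop, run δ q w n = p → p ∈ infOcc δ q w := fun p => by
    by_cases hp : p ∈ infOcc δ q w
    · exact .of_forall fun _ _ => hp
    · exact (not_frequently.1 hp).mono fun _ hn h => absurd h hn
  filter_upwards [eventually_all.2 h] with n hn using hn _ rfl

end InfOcc

lemma image_fst_infOcc_prodStep {Q' : Type*} [Finite Q'] (δ : Q → A → Q) (δ' : Q' → A → Q')
    (p : Q) (p' : Q') (w : ℕ → A) :
    Prod.fst '' infOcc (prodStep δ δ') (p, p') w = infOcc δ p w := by
  ext a
  constructor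
  · rintro ⟨⟨a, b⟩, h, rfl⟩
    exact h.mono fun n hn => by rw [run_prodStep] at hn; exact congrArg Prod.fst hn
  · intro ha
    obtain ⟨b, hb⟩ : ∃ b, ∃ᶠ n in atTop, run δ p w n = a ∧ run δ' p' w n = b :=
      frequently_exists.1 (ha.mono fun n hn => ⟨_, hn, rfl⟩)
    exact ⟨(a, b), hb.mono fun n hn => by rw [run_prodStep, hn.1, hn.2], rfl⟩

lemma image_snd_infOcc_prodStep {Q' : Type*} [Finite Q] (δ : Q → A → Q) (δ' : Q' → A → Q')
    (p : Q) (p' : Q') (w : ℕ → A) :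
    Prod.snd '' infOcc (prodStep δ δ') (p, p') w = infOcc δ' p' w := by
  ext a
  constructor
  · rintro ⟨⟨b, a⟩, h, rfl⟩
    exact h.mono fun n hn => by rw [run_prodStep] at hn; exact congrArg Prod.snd hn
  · intro ha
    obtain ⟨b, hb⟩ : ∃ b, ∃ᶠ n in atTop, run δ p w n = b ∧ run δ' p' w n = a :=
      frequently_exists.1 (ha.mono fun n hn => ⟨_, rfl, hn⟩)
    exact ⟨(b, a), hb.mono fun n hn => by rw [run_prodStep, hn.1, hn.2], rfl⟩

lemma exists_lt_dstar_take_eq [Fintype Q] (δ : Q → A → Q) (s : Q) (x : List A)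
    (hx : Fintype.card Q ≤ x.length) :
    ∃ i j, i < j ∧ j ≤ x.length ∧ dstar δ s (x.take i) = dstar δ s (x.take j) := by
  obtain ⟨i, j, hne, heq⟩ := Fintype.exists_ne_map_eq_of_card_lt
    (fun i : Fin (x.length + 1) => dstar δ s (x.take i)) (by simp; omega)
  rcases lt_or_gt_of_ne hne with hlt | hlt
  · exact ⟨i, j, hlt, by omega, heq⟩
  · exact ⟨j, i, hlt, by omega, heq.symm⟩

def StaysIn (δ : Q → A → Q) (S : Set Q) (s : Q) (x : List A) : Prop :=
  ∀ k, dstar δ s (x.take k) ∈ S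

namespace StaysIn

variable {δ : Q → A → Q} {S : Set Q} {s : Q} {x y : List A}

lemma dstar_mem (h : StaysIn δ S s x) : dstar δ s x ∈ S := by
  simpa using h x.length

lemma append (hx : StaysIn δ S s x) (hy : StaysIn δ S (dstar δ s x) y) :
    StaysIn δ S s (x ++ y) := by
  intro k
  rw [List.take_append, dstar_append]
  rcases le_total k x.length with hk | hk
  · simpa [Nat.sub_eq_zero_of_le hk] using hx k
  · rw [List.take_of_length_le hk]
    exact hy _

lemma take (h : StaysIn δ S s x) (i : ℕ) : StaysIn δ S s (x.take i) := fun k => by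
  rw [List.take_take]
  exact h _

lemma drop (h : StaysIn δ S s x) (i : ℕ) : StaysIn δ S (dstar δ s (x.take i)) (x.drop i) :=
  fun k => by
    rw [← dstar_append, ← List.take_add]
    exact h _

/-- Cutting out the loops of a path, as in the pumping lemma. -/
lemma exists_length_lt [Fintype Q] (h : StaysIn δ S s x) :
    ∃ y, StaysIn δ S s y ∧ dstar δ s y = dstar δ s x ∧ y.length < Fintype.card Q := by
  induction hn : x.length using Nat.strong_induction_on generalizing x with
  | _ n ih =>
    by_cases hx : x.length < Fintype.card Q
    · exact ⟨x, h, rfl, hx⟩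
    obtain ⟨i, j, hij, hj, heq⟩ := exists_lt_dstar_take_eq δ s x (not_lt.1 hx)
    have hcut : StaysIn δ S s (x.take i ++ x.drop j) := (h.take i).append (heq ▸ h.drop j)
    obtain ⟨y, hy, hyx, hlen⟩ := ih _ (by simp; omega) hcut rfl
    refine ⟨y, hy, hyx.trans ?_, hlen⟩
    rw [dstar_append, heq, ← dstar_append, List.take_append_drop]

lemma exists_ne_nil_length_le [Fintype Q] (h : StaysIn δ S s x) (hx : x ≠ []) :
    ∃ y ≠ [], StaysIn δ S s y ∧ dstar δ s y = dstar δ s x ∧ y.length ≤ Fintype.card Q := by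
  obtain ⟨a, x, rfl⟩ := List.exists_cons_of_ne_nil hx
  obtain ⟨y, hy, hyx, hlen⟩ := (h.drop 1).exists_length_lt
  exact ⟨a :: y, List.cons_ne_nil _ _, (h.take 1).append hy, hyx, by simp; omega⟩

end StaysIn

lemma exists_staysIn_infOcc [Finite Q] (δ : Q → A → Q) (q : Q) (w : ℕ → A) {s t : Q}
    (hs : s ∈ infOcc δ q w) (ht : t ∈ infOcc δ q w) :
    ∃ x ≠ [], StaysIn δ (infOcc δ q w) s x ∧ dstar δ s x = t := by
  obtain ⟨N₀, hN₀⟩ := eventually_atTop.1 (eventually_mem_infOcc δ q w)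
  obtain ⟨N, hN, rfl⟩ := frequently_atTop.1 hs N₀
  obtain ⟨M, hM, rfl⟩ := frequently_atTop.1 ht (N + 1)
  have hrun : ∀ k, dstar δ (run δ q w N) (((List.range' N (M - N)).map w).take k) =
      run δ q w (N + min k (M - N)) := fun k => by
    rcases le_total k (M - N) with hk | hk
    · rw [min_eq_left hk, run_add, ← List.map_take, List.take_range'_of_length_ge hk]
    · rw [min_eq_right hk, run_add, ← List.map_take, List.take_range'_of_length_le hk]
  refine ⟨(List.range' N (M - N)).map w, by simp; omega, fun k => ?_, ?_⟩
  · rw [hrun]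
    exact hN₀ _ (by omega)
  · rw [← List.take_length (l := List.map _ _), hrun]
    simp only [List.length_map, List.length_range', min_self]
    congr 1
    omega

lemma exists_staysIn_visiting {δ : Q → A → Q} {S : Set Q} {c : ℕ}
    (hS : ∀ s ∈ S, ∀ t ∈ S, ∃ x ≠ [], StaysIn δ S s x ∧ dstar δ s x = t ∧ x.length ≤ c)
    (L : List Q) (hL : ∀ t ∈ L, t ∈ S) {a b : Q} (ha : a ∈ S) (hb : b ∈ S) :
    ∃ v ≠ [], StaysIn δ S a v ∧ dstar δ a v = b ∧ v.length ≤ (L.length + 1) * c ∧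
      ∀ t ∈ L, ∃ r < v.length, dstar δ a (v.take r) = t := by
  induction L generalizing a with
  | nil =>
    obtain ⟨x, hx, hxS, hxb, hlen⟩ := hS a ha b hb
    exact ⟨x, hx, hxS, hxb, by simpa using hlen, by simp⟩
  | cons t L ih =>
    obtain ⟨x, hx, hxS, rfl, hxlen⟩ := hS a ha t (hL t List.mem_cons_self)
    obtain ⟨v, hv, hvS, hvb, hvlen, hvisit⟩ :=
      ih (fun t ht => hL t (List.mem_cons_of_mem _ ht)) (hxS.dstar_mem)
    have hv0 : 0 < v.length := List.length_pos_iff.2 hv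
    refine ⟨x ++ v, by simp [hx], hxS.append hvS, by rw [dstar_append, hvb], ?_, ?_⟩
    · simp only [List.length_append, List.length_cons]
      nlinarith
    · rintro t' (_ | ⟨_, ht'⟩)
      · exact ⟨x.length, by simp; omega, by simp⟩
      · obtain ⟨r, hr, rfl⟩ := hvisit t' ht'
        exact ⟨x.length + r, by simp; omega, by rw [List.take_length_add_append, dstar_append]⟩

section UpWord

variable {u v : List A} (hv : v ≠ [])

lemma map_upWord_range'_zero : (List.range' 0 u.length).map (upWord u v hv) = u :=
  List.ext_getElem (by simp) fun i _ hi => by simp [upWord, hi]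

lemma map_upWord_range'_period (m : ℕ) {r : ℕ} (hr : r ≤ v.length) :
    (List.range' (u.length + m * v.length) r).map (upWord u v hv) = v.take r := by
  refine List.ext_getElem (by simp; omega) fun i hi _ => ?_
  have hi : i < v.length := by simp at hi; omega
  simp [upWord, Nat.add_assoc, Nat.mod_eq_of_lt hi]

variable (δ : Q → A → Q) {q p : Q}

lemma run_upWord (hu : dstar δ q u = p) (hp : dstar δ p v = p) (m : ℕ) {r : ℕ}
    (hr : r ≤ v.length) :
    run δ q (upWord u v hv) (u.length + m * v.length + r) = dstar δ p (v.take r) := by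
  have hloop : ∀ m, run δ q (upWord u v hv) (u.length + m * v.length) = p := by
    intro m
    induction m with
    | zero => rw [Nat.zero_mul, Nat.add_zero, run_eq_dstar, map_upWord_range'_zero, hu]
    | succ m ih =>
      rw [Nat.succ_mul, ← Nat.add_assoc, run_add, ih, map_upWord_range'_period hv m le_rfl,
        List.take_length, hp]
  rw [run_add, hloop, map_upWord_range'_period hv m hr]

lemma infOcc_upWord (hu : dstar δ q u = p) (hp : dstar δ p v = p) :
    infOcc δ q (upWord u v hv) = {s | ∃ r < v.length, dstar δ p (v.take r) = s} := by
  have hv0 : 0 < v.length := List.length_pos_iff.2 hv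
  ext s
  constructor
  · intro hs
    have hev : ∀ᶠ n in atTop,
        ∃ r < v.length, dstar δ p (v.take r) = run δ q (upWord u v hv) n := by
      refine eventually_atTop.2 ⟨u.length, fun n hn => ⟨(n - u.length) % v.length,
        Nat.mod_lt _ hv0, ?_⟩⟩
      rw [← run_upWord hv δ hu hp ((n - u.length) / v.length) (Nat.mod_lt _ hv0).le]
      congr 1
      have := Nat.div_add_mod' (n - u.length) v.length
      omega
    obtain ⟨n, rfl, hn⟩ := (hs.and_eventually hev).exists
    exact hn
  · rintro ⟨r, hr, rfl⟩
    refine frequently_atTop.2 fun N =>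
      ⟨u.length + N * v.length + r, ?_, run_upWord hv δ hu hp N hr.le⟩
    nlinarith

end UpWord

theorem exists_upWord_infOcc_eq [Fintype Q] (δ : Q → A → Q) (q : Q) (w : ℕ → A) :
    ∃ (u v : List A) (hv : v ≠ []), u.length < Fintype.card Q ∧
      v.length ≤ Fintype.card Q ^ 2 ∧ infOcc δ q (upWord u v hv) = infOcc δ q w := by
  classical
  set S := infOcc δ q w
  obtain ⟨p, hp⟩ := infOcc_nonempty δ q w
  obtain ⟨u, -, hu, hulen⟩ : ∃ u, StaysIn δ Set.univ q u ∧ dstar δ q u = p ∧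
      u.length < Fintype.card Q := by
    obtain ⟨N, -, rfl⟩ := frequently_atTop.1 hp 0
    rw [run_eq_dstar]
    exact StaysIn.exists_length_lt fun _ => Set.mem_univ _
  have hS : ∀ s ∈ S, ∀ t ∈ S, ∃ x ≠ [], StaysIn δ S s x ∧ dstar δ s x = t ∧
      x.length ≤ Fintype.card Q := fun s hs t ht => by
    obtain ⟨x, hx, hxS, rfl⟩ := exists_staysIn_infOcc δ q w hs ht
    exact hxS.exists_ne_nil_length_le hx
  set T := (Finset.univ.filter (· ∈ S)).erase p
  obtain ⟨v, hv, hvS, hvp, hvlen, hvisit⟩ :=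
    exists_staysIn_visiting hS T.toList (by simp [T]) hp hp
  refine ⟨u, v, hv, hulen, ?_, ?_⟩
  · have hT : T.card + 1 ≤ Fintype.card Q :=
      (Finset.card_erase_add_one (by simpa using hp)).trans_le (Finset.card_le_univ _)
    rw [Finset.length_toList] at hvlen
    nlinarith
  · rw [infOcc_upWord hv δ hu hvp]
    ext s
    refine ⟨fun ⟨r, _, hr⟩ => hr ▸ hvS r, fun hs => ?_⟩
    by_cases hsp : s = p
    · exact ⟨0, List.length_pos_iff.2 hv, by simp [hsp]⟩
    · exact hvisit s (by simp [T, hsp, hs])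

end

theorem stmt8_general {A Q : Type*} [Fintype Q] (δ : Q → A → Q) (𝓕 : Set (Set Q))
    (q₁ q₂ : Q)
    (h : ∃ w : ℕ → A, Xor' (mullerAccept δ 𝓕 q₁ w) (mullerAccept δ 𝓕 q₂ w)) :
    ∃ (u v : List A) (hv : v ≠ []),
      u.length + v.length ≤ Fintype.card Q ^ 2 + Fintype.card Q ^ 4 ∧
      Xor' (mullerAccept δ 𝓕 q₁ (upWord u v hv)) (mullerAccept δ 𝓕 q₂ (upWord u v hv)) := by
  obtain ⟨w, hw⟩ := h
  obtain ⟨u, v, hv, hu, hvlen, hinf⟩ := exists_upWord_infOcc_eq (prodStep δ δ) (q₁, q₂) w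
  have hcard : Fintype.card (Q × Q) = Fintype.card Q ^ 2 := by simp [sq]
  refine ⟨u, v, hv, ?_, ?_⟩
  · rw [hcard] at hu hvlen
    rw [show Fintype.card Q ^ 4 = (Fintype.card Q ^ 2) ^ 2 by ring]
    omega
  · simpa only [mullerAccept, ← image_fst_infOcc_prodStep δ δ q₁ q₂,
      ← image_snd_infOcc_prodStep δ δ q₁ q₂, hinf] using hw

/-- If two states of a DMA with `n` states are distinguishable, they are distinguishable by
an ultimately periodic word of length at most `n² + n⁴`. -/
theorem stmt8 {A Q : Type*} [Fintype A] [Fintype Q] (δ : Q → A → Q) (𝓕 : Set (Set Q))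
    (q₁ q₂ : Q)
    (h : ∃ w : ℕ → A, Xor' (mullerAccept δ 𝓕 q₁ w) (mullerAccept δ 𝓕 q₂ w)) :
    ∃ (u v : List A) (hv : v ≠ []),
      u.length + v.length ≤ Fintype.card Q ^ 2 + Fintype.card Q ^ 4 ∧
      Xor' (mullerAccept δ 𝓕 q₁ (upWord u v hv)) (mullerAccept δ 𝓕 q₂ (upWord u v hv)) :=
  stmt8_general δ 𝓕 q₁ q₂ h
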